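/- Fix a measurement interval [t_s, t_e], exponents α, β, γ ∈ (0, ∞), and n > 2. Let x be an event with n distinct occurrences (all timestamps distinct) contained in [t_s, t_e], with first occurrence t_f and last occurrence t_l (t_f < t_l), and let x̃^n be the event with n distinct occurrences equally spaced over [t_f, t_l] (at timestamps t_f + i·(t_l - t_f)/(n-1) for i = 0, ..., n-1). Then P(x;[t_s,t_e]) ≤ P(x̃^n;[t_s,t_e]), with equality if and only if all the gaps of x are equal (i.e., x's occurrences are themselves equally spaced). -/

import Mathlib

/-!
An event is a finite, nondecreasing list `l` of occurrence timestamps (reals, repetitions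
allowed). `tF l` / `tL l` are the first / last occurrences, `l.dedup` lists the distinct
occurrences, `gapSeq l i` is the `i`-th gap between consecutive distinct occurrences,
`Wterm` is the width term, `Fterm` the frequency term, `gapEntropy` the (normalized-gap)
Shannon entropy, `Sterm` the spread term, and `Pers` the persistence measure
`W^α · F^β · S^γ`.
-/

noncomputable section

/-- First occurrence `t_f` of an event (a sorted list of timestamps). -/
def tF (l : List ℝ) : ℝ := l.headI

/-- Last occurrence `t_l` of an event. -/
def tL (l : List ℝ) : ℝ := l.getLastD 0

/-- The `i`-th gap `g i = u (i+1) - u i` between consecutive distinct occurrences. -/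
def gapSeq (l : List ℝ) (i : ℕ) : ℝ := l.dedup.getD (i + 1) 0 - l.dedup.getD i 0

/-- Width term `W(x;[t_s,t_e]) = (t_l - t_f + 1)/(t_e - t_s + 1)` (0 if no occurrences). -/
def Wterm (l : List ℝ) (ts te : ℝ) : ℝ :=
  if l.length = 0 then 0 else (tL l - tF l + 1) / (te - ts + 1)

/-- Frequency term `F(x;[t_s,t_e]) = log₁₀ (n + 1)`. -/
def Fterm (l : List ℝ) : ℝ := Real.logb 10 (l.length + 1)

/-- Gap entropy `H(Γ_x) = -∑ (g i/(t_l - t_f)) · log₂ (g i/(t_l - t_f))`. -/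
def gapEntropy (l : List ℝ) : ℝ :=
  -∑ i ∈ Finset.range (l.dedup.length - 1),
    (gapSeq l i / (tL l - tF l)) * Real.logb 2 (gapSeq l i / (tL l - tF l))

/-- Spread term `S(x;[t_s,t_e]) = H(Γ_x)/log₂(m-1) + 1` if there are `m - 1 > 1` gaps,
and `1` if `m - 1 ∈ {0, 1}`. -/
def Sterm (l : List ℝ) : ℝ :=
  if 1 < l.dedup.length - 1 then
    gapEntropy l / Real.logb 2 (l.dedup.length - 1) + 1
  else 1

/-- Persistence measure `P(x;[t_s,t_e]) = W^α · F^β · S^γ` (real exponents). -/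
def Pers (l : List ℝ) (ts te α β γ : ℝ) : ℝ :=
  Wterm l ts te ^ α * Fterm l ^ β * Sterm l ^ γ

end

/-- The event with `n` equally spaced occurrences `a + i · (L / (n - 1))`, `i = 0, …, n-1`,
covering an interval of occurrences of width `L`. -/
noncomputable def uniformEvent (a L : ℝ) (n : ℕ) : List ℝ :=
  (List.range n).map (fun i => a + (i : ℝ) * (L / ((n : ℝ) - 1)))

/-!
The width and frequency terms only see the number of occurrences and `t_f`, `t_l`, which `x` and
`x̃ⁿ` share, so everything comes down to the spread term. For strictly increasing timestamps the
normalized gaps `g_i / (t_l - t_f)` form a probability vector on the `n - 1` gaps, and Jensen's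
inequality for the strictly concave `x ↦ -x log x` bounds its entropy by `log (n - 1)`, with
equality exactly when all gaps are equal. Hence `S ≤ 2`, with equality iff the gaps are equal,
and `S(x̃ⁿ) = 2`.
-/

open Real Finset

namespace Real

variable {ι : Type*} {s : Finset ι} {p : ι → ℝ}

lemma negMulLog_inv (x : ℝ) : negMulLog x⁻¹ = x⁻¹ * log x := by
  simp [negMulLog, log_inv]

lemma card_pos_of_sum_eq_one (hsum : ∑ i ∈ s, p i = 1) : (0 : ℝ) < #s := by
  have : s.Nonempty := nonempty_of_sum_ne_zero (hsum ▸ one_ne_zero)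
  exact_mod_cast this.card_pos

lemma sum_negMulLog_nonneg (hp : ∀ i ∈ s, 0 ≤ p i) (hsum : ∑ i ∈ s, p i = 1) :
    0 ≤ ∑ i ∈ s, negMulLog (p i) :=
  sum_nonneg fun _ hi => negMulLog_nonneg (hp _ hi) (hsum ▸ single_le_sum hp hi)

lemma sum_negMulLog_le_log_card (hp : ∀ i ∈ s, 0 ≤ p i) (hsum : ∑ i ∈ s, p i = 1) :
    ∑ i ∈ s, negMulLog (p i) ≤ log #s := by
  have hs := card_pos_of_sum_eq_one hsum
  have hw : ∑ _i ∈ s, (#s : ℝ)⁻¹ = 1 := by simp [hs.ne']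
  have := concaveOn_negMulLog.le_map_sum (fun _ _ => by positivity) hw hp
  simp only [smul_eq_mul, ← mul_sum, hsum, mul_one, negMulLog_inv] at this
  exact le_of_mul_le_mul_left this (inv_pos.2 hs)

lemma sum_negMulLog_eq_log_card_iff (hp : ∀ i ∈ s, 0 ≤ p i) (hsum : ∑ i ∈ s, p i = 1) :
    ∑ i ∈ s, negMulLog (p i) = log #s ↔ ∀ i ∈ s, ∀ j ∈ s, p i = p j := by
  have hs := card_pos_of_sum_eq_one hsum
  have hw : ∑ _i ∈ s, (#s : ℝ)⁻¹ = 1 := by simp [hs.ne']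
  have := strictConcaveOn_negMulLog.map_sum_eq_iff_of_pos (fun _ _ => by positivity) hw hp
  simp only [smul_eq_mul, ← mul_sum, hsum, mul_one, negMulLog_inv] at this
  rw [← this, eq_comm, mul_right_inj' (inv_pos.2 hs).ne']

lemma log_card_range_pos {k : ℕ} (hk : 2 ≤ k) : 0 < log #(range k) := by
  rw [card_range]
  exact log_pos (by norm_cast)

end Real

section Event

variable {l : List ℝ}

lemma tF_eq_getD (l : List ℝ) : tF l = l.getD 0 0 := by
  cases l <;> rfl

lemma tL_eq_getD (l : List ℝ) : tL l = l.getD (l.length - 1) 0 := by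
  rw [tL, List.getLastD_eq_getLast?, List.getLast?_eq_getElem?, List.getD_eq_getElem?_getD]

lemma tF_mem (hl : l ≠ []) : tF l ∈ l := by
  rw [tF_eq_getD, List.getD_eq_getElem _ _ (List.length_pos_iff.2 hl)]
  exact List.getElem_mem _

lemma tL_mem (hl : l ≠ []) : tL l ∈ l := by
  have := List.length_pos_iff.2 hl
  rw [tL_eq_getD, List.getD_eq_getElem _ _ (by omega)]
  exact List.getElem_mem _

lemma gapSeq_of_nodup (hl : l.Nodup) (i : ℕ) :
    gapSeq l i = l.getD (i + 1) 0 - l.getD i 0 := by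
  rw [gapSeq, List.dedup_eq_self.2 hl]

lemma sum_gapSeq_of_nodup (hl : l.Nodup) :
    ∑ i ∈ range (l.length - 1), gapSeq l i = tL l - tF l := by
  simp only [gapSeq_of_nodup hl]
  rw [sum_range_sub (fun i => l.getD i 0), tL_eq_getD, tF_eq_getD]

lemma gapSeq_pos (hl : l.Pairwise (· < ·)) {i : ℕ} (hi : i + 1 < l.length) :
    0 < gapSeq l i := by
  rw [gapSeq_of_nodup hl.nodup, sub_pos, List.getD_eq_getElem _ _ hi,
    List.getD_eq_getElem _ _ (by omega)]
  exact List.pairwise_iff_getElem.1 hl _ _ _ _ (Nat.lt_succ_self i)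

lemma tF_lt_tL (hl : l.Pairwise (· < ·)) (h2 : 2 ≤ l.length) : tF l < tL l := by
  rw [← sub_pos, ← sum_gapSeq_of_nodup hl.nodup]
  exact sum_pos (fun i hi => gapSeq_pos hl (by rw [mem_range] at hi; omega))
    (nonempty_range_iff.2 (by omega))

lemma Wterm_pos {ts te : ℝ} (hl : l ≠ []) (hmem : ∀ t ∈ l, ts ≤ t ∧ t ≤ te)
    (h : tF l ≤ tL l) : 0 < Wterm l ts te := by
  have hts := (hmem _ (tF_mem hl)).1
  have hte := (hmem _ (tL_mem hl)).2
  rw [Wterm, if_neg (List.length_pos_iff.2 hl).ne']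
  exact div_pos (by linarith) (by linarith)

lemma Fterm_pos (hl : l ≠ []) : 0 < Fterm l := by
  have := List.length_pos_iff.2 hl
  exact logb_pos (by norm_num) (by norm_cast; omega)

noncomputable def normalizedGap (l : List ℝ) (i : ℕ) : ℝ := gapSeq l i / (tL l - tF l)

lemma normalizedGap_nonneg (hl : l.Pairwise (· < ·)) :
    ∀ i ∈ range (l.length - 1), 0 ≤ normalizedGap l i := fun i hi => by
  rw [mem_range] at hi
  exact div_nonneg (gapSeq_pos hl (by omega)).le (sub_nonneg.2 (tF_lt_tL hl (by omega)).le)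

lemma sum_normalizedGap (hl : l.Pairwise (· < ·)) (h2 : 2 ≤ l.length) :
    ∑ i ∈ range (l.length - 1), normalizedGap l i = 1 := by
  simp only [normalizedGap]
  rw [← sum_div, sum_gapSeq_of_nodup hl.nodup, div_self (sub_pos.2 (tF_lt_tL hl h2)).ne']

lemma gapEntropy_eq_sum_negMulLog (l : List ℝ) :
    gapEntropy l =
      (∑ i ∈ range (l.dedup.length - 1), negMulLog (normalizedGap l i)) / log 2 := by
  rw [gapEntropy, sum_div, ← sum_neg_distrib]
  refine sum_congr rfl fun i _ => ?_
  simp only [negMulLog, logb, normalizedGap]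
  ring

lemma Sterm_eq (hl : l.Pairwise (· < ·)) (h3 : 3 ≤ l.length) :
    Sterm l = (∑ i ∈ range (l.length - 1), negMulLog (normalizedGap l i)) /
      log #(range (l.length - 1)) + 1 := by
  rw [Sterm, gapEntropy_eq_sum_negMulLog, logb, div_div_div_cancel_right₀ (by positivity),
    List.dedup_eq_self.2 hl.nodup, if_pos (by omega), card_range, Nat.cast_sub (by omega),
    Nat.cast_one]

lemma one_le_Sterm (hl : l.Pairwise (· < ·)) (h3 : 3 ≤ l.length) : 1 ≤ Sterm l := by
  rw [Sterm_eq hl h3, le_add_iff_nonneg_left]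
  exact div_nonneg
    (sum_negMulLog_nonneg (normalizedGap_nonneg hl) (sum_normalizedGap hl (by omega)))
    (log_card_range_pos (by omega : 2 ≤ l.length - 1)).le

lemma Sterm_le_two (hl : l.Pairwise (· < ·)) (h3 : 3 ≤ l.length) : Sterm l ≤ 2 := by
  rw [Sterm_eq hl h3, ← one_add_one_eq_two, add_le_add_iff_right,
    div_le_one (log_card_range_pos (by omega : 2 ≤ l.length - 1))]
  exact sum_negMulLog_le_log_card (normalizedGap_nonneg hl) (sum_normalizedGap hl (by omega))

lemma Sterm_eq_two_iff (hl : l.Pairwise (· < ·)) (h3 : 3 ≤ l.length) :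
    Sterm l = 2 ↔ ∀ i ∈ range (l.length - 1), ∀ j ∈ range (l.length - 1),
      gapSeq l i = gapSeq l j := by
  rw [Sterm_eq hl h3, ← one_add_one_eq_two, add_left_inj,
    div_eq_one_iff_eq (log_card_range_pos (by omega : 2 ≤ l.length - 1)).ne',
    sum_negMulLog_eq_log_card_iff (normalizedGap_nonneg hl) (sum_normalizedGap hl (by omega))]
  simp only [normalizedGap, div_left_inj' (sub_pos.2 (tF_lt_tL hl (by omega))).ne']

end Event

section UniformEvent

variable {a L : ℝ} {n : ℕ}

/-- `uniformEvent` elaborates `List.range n` as a list of reals through a monadic coercion;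
this is the same list as a map over `ℕ`. -/
lemma uniformEvent_eq_map :
    uniformEvent a L n = (List.range n).map fun i : ℕ => a + i * (L / (n - 1)) := by
  simp [uniformEvent, ← List.map_eq_flatMap]

lemma length_uniformEvent : (uniformEvent a L n).length = n := by
  simp [uniformEvent_eq_map]

lemma getD_uniformEvent {i : ℕ} (hi : i < n) :
    (uniformEvent a L n).getD i 0 = a + i * (L / (n - 1)) := by
  simp [uniformEvent_eq_map, List.getD_eq_getElem?_getD, hi]

lemma pairwise_uniformEvent (hL : 0 < L) (hn : 1 < n) :
    (uniformEvent a L n).Pairwise (· < ·) := by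
  have hd : 0 < L / (n - 1) := div_pos hL (by rw [sub_pos]; exact_mod_cast hn)
  rw [uniformEvent_eq_map]
  refine List.pairwise_lt_range.map _ fun i j hij => ?_
  have : (i : ℝ) < j := by exact_mod_cast hij
  simpa using mul_lt_mul_of_pos_right this hd

lemma tF_uniformEvent (hn : 0 < n) : tF (uniformEvent a L n) = a := by
  rw [tF_eq_getD, getD_uniformEvent hn]
  simp

lemma tL_uniformEvent (hn : 1 < n) : tL (uniformEvent a L n) = a + L := by
  have : (n : ℝ) - 1 ≠ 0 := by rw [sub_ne_zero]; exact_mod_cast hn.ne'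
  rw [tL_eq_getD, length_uniformEvent, getD_uniformEvent (by omega),
    Nat.cast_sub hn.le, Nat.cast_one, mul_div_cancel₀ _ this]

lemma gapSeq_uniformEvent (hL : 0 < L) {i : ℕ} (hi : i + 1 < n) :
    gapSeq (uniformEvent a L n) i = L / (n - 1) := by
  rw [gapSeq_of_nodup (pairwise_uniformEvent hL (by omega)).nodup, getD_uniformEvent hi,
    getD_uniformEvent (by omega)]
  push_cast
  ring

end UniformEvent

theorem persistence_P3_uniform_spacing_maximal_general (ts te : ℝ) (n : ℕ) (hn : 2 < n)
    (l : List ℝ) (hsorted : l.Pairwise (· < ·)) (hlen : l.length = n)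
    (hmem : ∀ t ∈ l, ts ≤ t ∧ t ≤ te)
    (α β γ : ℝ) (hγ : 0 < γ) :
    Pers l ts te α β γ ≤ Pers (uniformEvent (tF l) (tL l - tF l) n) ts te α β γ ∧
    (Pers l ts te α β γ = Pers (uniformEvent (tF l) (tL l - tF l) n) ts te α β γ ↔
      ∀ i ∈ Finset.range (n - 1), ∀ j ∈ Finset.range (n - 1), gapSeq l i = gapSeq l j) := by
  subst hlen
  set u := uniformEvent (tF l) (tL l - tF l) l.length
  have hne : l ≠ [] := List.ne_nil_of_length_pos (by omega)
  have hfl : tF l < tL l := tF_lt_tL hsorted (by omega)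
  have hL : 0 < tL l - tF l := sub_pos.2 hfl
  have hu : u.Pairwise (· < ·) := pairwise_uniformEvent hL (by omega)
  have hSu : Sterm u = 2 := by
    refine (Sterm_eq_two_iff hu (by rw [length_uniformEvent]; omega)).2 fun i hi j hj => ?_
    rw [length_uniformEvent, mem_range] at hi hj
    rw [gapSeq_uniformEvent hL (by omega), gapSeq_uniformEvent hL (by omega)]
  have hW : Wterm u ts te = Wterm l ts te := by
    rw [Wterm, Wterm, length_uniformEvent, tF_uniformEvent (by omega),
      tL_uniformEvent (by omega), add_sub_cancel_left]
  have hF : Fterm u = Fterm l := by rw [Fterm, Fterm, length_uniformEvent]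
  have hC : 0 < Wterm l ts te ^ α * Fterm l ^ β :=
    mul_pos (rpow_pos_of_pos (Wterm_pos hne hmem hfl.le) α) (rpow_pos_of_pos (Fterm_pos hne) β)
  have hS : 0 ≤ Sterm l := zero_le_one.trans (one_le_Sterm hsorted (by omega))
  simp only [Pers, hW, hF, hSu]
  rw [mul_right_inj' hC.ne', rpow_left_inj hS zero_le_two hγ.ne',
    Sterm_eq_two_iff hsorted (by omega)]
  exact ⟨by gcongr; exact Sterm_le_two hsorted (by omega), Iff.rfl⟩

/-- Property P3: among events with `n > 2` distinct occurrences, first occurrence `t_f`,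
and last occurrence `t_l`, persistence is maximized by the event with uniformly spaced
occurrences, with equality iff all the gaps are equal. -/
theorem persistence_P3_uniform_spacing_maximal (ts te : ℝ) (n : ℕ) (hn : 2 < n)
    (l : List ℝ) (hsorted : l.Pairwise (· < ·)) (hlen : l.length = n)
    (hmem : ∀ t ∈ l, ts ≤ t ∧ t ≤ te) (htfl : tF l < tL l)
    (α β γ : ℝ) (hα : 0 < α) (hβ : 0 < β) (hγ : 0 < γ) :
    Pers l ts te α β γ ≤ Pers (uniformEvent (tF l) (tL l - tF l) n) ts te α β γ ∧
    (Pers l ts te α β γ = Pers (uniformEvent (tF l) (tL l - tF l) n) ts te α β γ ↔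
      ∀ i ∈ Finset.range (n - 1), ∀ j ∈ Finset.range (n - 1), gapSeq l i = gapSeq l j) :=
  persistence_P3_uniform_spacing_maximal_general ts te n hn l hsorted hlen hmem α β γ hγ
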